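/- Let λ > 0. Define Σ₁ = {(y,τ) ∈ ℝ² : −1 < y < −1/2, τ²(1+y) > 1−y} and Σ₂ = {(y,τ) ∈ ℝ² : −1/2 < y < 0, τ²(1+y) > 1−y}, and Ω = {z ∈ ℂ : Re(z) < λ/2, Re(z) ≠ 0, Im(z) ≠ 0}. Then the map (y,τ) ↦ e₁(y,τ) = λ(2y+1)(1 + iτ(1 + 1/y))(1 − iτ)/(2(1 + iτ)) is a bijection from Σ₁ ∪ Σ₂ onto Ω. -/

import Mathlib

open Complex

/-- The trajectory map `e₁(y,τ)` of the paper, for a fixed real parameter `lam`. -/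
noncomputable def e1Traj (lam y τ : ℝ) : ℂ :=
  (lam : ℂ) * (2 * (y : ℂ) + 1) * (1 + Complex.I * (τ : ℂ) * (1 + 1 / (y : ℂ))) *
    (1 - Complex.I * (τ : ℂ)) / (2 * (1 + Complex.I * (τ : ℂ)))

/-!
Write `e₁ = λ(2y+1)/(2y) · (x + iτ(1-x))` with `x = (y + (y+2)τ²)/(1+τ²)`. Over a point
`z = u + iv`, the equations `Re e₁ = u`, `Im e₁ = v` give `y = λx/(2(u-λx))` and
`τ = vx/(u(1-x))`, and the remaining relation `x - y = τ²(2+y-x)` between `x`, `y`, `τ` becomes the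
cubic equation `u²(x-1)² num(x) = v² x den(x)` in `x` alone. So the fibre over `z` is in bijection
with the roots `x > 1` of this cubic. It changes sign on `(1, 2)`, which gives surjectivity; and
every root `x > 1` has `den(x) < 0`, where `(x-1)² num(x) / (x den(x))` is strictly increasing,
which gives injectivity.
-/

namespace PointA

variable {lam u v x y t : ℝ}

lemma e1Traj_eq (hy : y ≠ 0) (hx : x - y = t ^ 2 * (2 + y - x)) :
    e1Traj lam y t = ((lam * (2 * y + 1) / (2 * y) : ℝ) : ℂ) * (x + (t * (1 - x) : ℝ) * I) := by
  have hx' : x = (y + (y + 2) * t ^ 2) / (1 + t ^ 2) := by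
    rw [eq_div_iff (by positivity)]; linear_combination hx
  have hy' : (y : ℂ) ≠ 0 := ofReal_ne_zero.mpr hy
  have hI : 1 + I * t ≠ 0 := fun h => by simpa using congrArg re h
  have ht : (1 : ℂ) + t ^ 2 ≠ 0 := by exact_mod_cast (by positivity : (1 : ℝ) + t ^ 2 ≠ 0)
  subst hx'
  rw [e1Traj]
  push_cast
  field_simp
  ring_nf
  simp only [I_sq]
  ring

lemma e1Traj_eq_iff (hy : y ≠ 0) (hx0 : x ≠ 0) (hx : x - y = t ^ 2 * (2 + y - x)) {z : ℂ} :
    e1Traj lam y t = z ↔ 2 * y * (z.re - lam * x) = lam * x ∧ z.im * x = z.re * (t * (1 - x)) := by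
  rw [e1Traj_eq hy hx, Complex.ext_iff]
  simp only [mul_re, mul_im, ofReal_re, ofReal_im, add_re, add_im, I_re, I_im, mul_zero,
    zero_mul, mul_one, sub_zero, add_zero, zero_add]
  constructor
  · rintro ⟨hre, him⟩
    rw [← hre, ← him]
    constructor
    · field_simp; ring
    · field_simp
  · rintro ⟨hA, hB⟩
    constructor
    · field_simp; linear_combination -hA
    · field_simp
      refine mul_left_cancel₀ hx0 ?_
      linear_combination -t * (1 - x) * hA - 2 * y * hB

-- Once `2y(u - λx) = λx`, we have `den = 2(u - λx)(2 + y - x)` and `x num = 2(u - λx)(x - y)`,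
-- so the relation `x - y = τ²(2 + y - x)` reads `τ² den = x num`.
def den (lam u x : ℝ) : ℝ := 2 * lam * x ^ 2 - (2 * u + 3 * lam) * x + 4 * u

def num (lam u x : ℝ) : ℝ := 2 * u - lam - 2 * lam * x

def resolvent (lam u v x : ℝ) : ℝ := u ^ 2 * (x - 1) ^ 2 * num lam u x - v ^ 2 * x * den lam u x

noncomputable def fiberPoint (lam u v x : ℝ) : ℝ × ℝ :=
  (lam * x / (2 * (u - lam * x)), v * x / (u * (1 - x)))

lemma den_eq (hA : 2 * y * (u - lam * x) = lam * x) :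
    den lam u x = 2 * (u - lam * x) * (2 + y - x) := by
  unfold den; linear_combination -hA

lemma resolvent_mul_eq (hA : 2 * y * (u - lam * x) = lam * x) (hB : v * x = u * (t * (1 - x))) :
    resolvent lam u v x * x =
      2 * (u * (1 - x)) ^ 2 * (u - lam * x) * (x - y - t ^ 2 * (2 + y - x)) := by
  rw [resolvent, num, den_eq hA]
  linear_combination u ^ 2 * (x - 1) ^ 2 * hA
    - 2 * (u - lam * x) * (2 + y - x) * (v * x + u * (t * (1 - x))) * hB

lemma one_lt_of_sub_eq (hyt : 1 - y < t ^ 2 * (1 + y)) (hX : x - y = t ^ 2 * (2 + y - x)) :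
    1 < x := by
  nlinarith [sq_nonneg t]

lemma target_of_source (hlam : 0 < lam) (hy : y < 0) (hy2 : y ≠ -1 / 2)
    (hyt : 1 - y < t ^ 2 * (1 + y)) (hX : x - y = t ^ 2 * (2 + y - x))
    (hA : 2 * y * (u - lam * x) = lam * x) (hB : v * x = u * (t * (1 - x))) :
    u < lam / 2 ∧ u ≠ 0 ∧ v ≠ 0 := by
  have hx1 : 1 < x := one_lt_of_sub_eq hyt hX
  have hux : u - lam * x < 0 := by nlinarith
  have hxy : 0 < 2 + y - x := by nlinarith [sq_nonneg t]
  have hu : u = (2 * y + 1) * (u - lam * x) := by linear_combination -hA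
  have ht : t ≠ 0 := by rintro rfl; linarith
  have hy1 : -1 < y := by nlinarith [sq_nonneg t]
  have hu0 : u ≠ 0 := by rw [hu]; exact mul_ne_zero (fun h => hy2 (by linarith)) hux.ne
  -- `(2y+1)x - y = (2y+1)(x-2-y) + 2(y+1)²`
  have hpos : 0 < (2 * y + 1) * x - y := by
    rcases le_or_gt 0 (2 * y + 1) with h | h <;> nlinarith
  refine ⟨by nlinarith [mul_pos hlam hpos], hu0, ?_⟩
  rintro rfl
  have : u * (t * (1 - x)) = 0 := by rw [← hB, zero_mul]
  simp [hu0, ht, sub_eq_zero, hx1.ne] at this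

lemma source_of_target (hlam : 0 < lam) (hu : u < lam / 2) (hu0 : u ≠ 0) (hx1 : 1 < x)
    (hX : x - y = t ^ 2 * (2 + y - x))
    (hA : 2 * y * (u - lam * x) = lam * x) :
    y < 0 ∧ y ≠ -1 / 2 ∧ 1 - y < t ^ 2 * (1 + y) := by
  have hux : u - lam * x < 0 := by nlinarith
  have hy : y < 0 := by nlinarith
  have hxy : 0 < 2 + y - x := by nlinarith [sq_nonneg t]
  refine ⟨hy, ?_, ?_⟩
  · rintro rfl
    apply hu0; linear_combination -hA
  · have key : (t ^ 2 * (1 + y) - (1 - y)) * (2 + y - x) = 2 * (x - 1) := by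
      linear_combination -(1 + y) * hX
    nlinarith

lemma den_neg_of_resolvent_eq_zero (hlam : 0 < lam) (hu : u < lam / 2) (hu0 : u ≠ 0)
    (hx1 : 1 < x) (h : resolvent lam u v x = 0) : den lam u x < 0 := by
  have hnum : num lam u x < 0 := by unfold num; nlinarith
  have hsq : 0 < u ^ 2 * (x - 1) ^ 2 := by have := sub_pos.2 hx1; positivity
  by_contra! hd
  unfold resolvent at h
  nlinarith [mul_nonneg (mul_nonneg (sq_nonneg v) (by linarith : (0 : ℝ) ≤ x)) hd]

lemma exists_resolvent_eq_zero (hlam : 0 < lam) (hu : u < lam / 2) (hv0 : v ≠ 0) :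
    ∃ x ∈ Set.Ioo 1 2, resolvent lam u v x = 0 := by
  have hv : 0 < v ^ 2 := by positivity
  have h1 : 0 < resolvent lam u v 1 := by unfold resolvent num den; nlinarith
  have h2 : resolvent lam u v 2 < 0 := by unfold resolvent num den; nlinarith [sq_nonneg u]
  have hcont : Continuous (resolvent lam u v) := by unfold resolvent num den; fun_prop
  exact intermediate_value_Ioo' one_le_two hcont.continuousOn ⟨h2, h1⟩

-- Cleared of denominators, this says that `x ↦ (x-1)² num / (x den)`, which equals `v²/u²` at a
-- root of the resolvent, is strictly increasing on the range where `den < 0`.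
lemma cross_mul_lt (hlam : 0 < lam) (hu : u < lam / 2) {x₁ x₂ : ℝ} (h1 : 1 < x₁) (h12 : x₁ < x₂)
    (hd : den lam u x₂ < 0) :
    x₂ * (x₁ - 1) ^ 2 * num lam u x₁ * den lam u x₂ <
      x₁ * (x₂ - 1) ^ 2 * num lam u x₂ * den lam u x₁ := by
  have hn1 : num lam u x₁ < -(2 * lam) := by unfold num; nlinarith
  have hn2 : num lam u x₂ < -(2 * lam) := by unfold num; nlinarith
  have hprod : 4 * lam ^ 2 < num lam u x₁ * num lam u x₂ := by nlinarith
  have key : x₁ * (x₂ - 1) ^ 2 * num lam u x₂ * den lam u x₁ -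
      x₂ * (x₁ - 1) ^ 2 * num lam u x₁ * den lam u x₂ =
      (x₂ - x₁) * (x₁ * (x₂ - 1) ^ 2 * (num lam u x₁ * num lam u x₂ - 4 * lam ^ 2) +
        num lam u x₁ * den lam u x₂ * (x₁ * x₂ - 1)) := by
    unfold num den; ring
  have hA : 0 < x₁ * (x₂ - 1) ^ 2 * (num lam u x₁ * num lam u x₂ - 4 * lam ^ 2) := by
    have := sub_pos.2 (h1.trans h12); have := sub_pos.2 hprod
    have : (0 : ℝ) < x₁ := by linarith
    positivity
  have hB : 0 < num lam u x₁ * den lam u x₂ * (x₁ * x₂ - 1) :=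
    mul_pos (mul_pos_of_neg_of_neg (by linarith) hd) (by nlinarith)
  nlinarith [mul_pos (sub_pos.2 h12) (add_pos hA hB)]

lemma resolvent_ne_zero_of_lt (hlam : 0 < lam) (hu : u < lam / 2) (hu0 : u ≠ 0) {x₁ x₂ : ℝ}
    (h1 : 1 < x₁) (h12 : x₁ < x₂) (hr1 : resolvent lam u v x₁ = 0) :
    resolvent lam u v x₂ ≠ 0 := by
  intro hr2
  have hlt := cross_mul_lt hlam hu h1 h12
    (den_neg_of_resolvent_eq_zero hlam hu hu0 (h1.trans h12) hr2)
  have : u ^ 2 * (x₂ * (x₁ - 1) ^ 2 * num lam u x₁ * den lam u x₂ -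
      x₁ * (x₂ - 1) ^ 2 * num lam u x₂ * den lam u x₁) = 0 := by
    unfold resolvent at hr1 hr2
    linear_combination x₂ * den lam u x₂ * hr1 - x₁ * den lam u x₁ * hr2
  rcases mul_eq_zero.mp this with h | h
  · exact hu0 (pow_eq_zero_iff two_ne_zero |>.mp h)
  · linarith

lemma eq_of_resolvent_eq_zero (hlam : 0 < lam) (hu : u < lam / 2) (hu0 : u ≠ 0) {x₁ x₂ : ℝ}
    (h1 : 1 < x₁) (h2 : 1 < x₂) (hr1 : resolvent lam u v x₁ = 0)
    (hr2 : resolvent lam u v x₂ = 0) : x₁ = x₂ := by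
  rcases lt_trichotomy x₁ x₂ with h | h | h
  · exact absurd hr2 (resolvent_ne_zero_of_lt hlam hu hu0 h1 h hr1)
  · exact h
  · exact absurd hr1 (resolvent_ne_zero_of_lt hlam hu hu0 h2 h hr2)

lemma fiberPoint_eq (hux : u - lam * x ≠ 0) (hu1 : u * (1 - x) ≠ 0)
    (hA : 2 * y * (u - lam * x) = lam * x) (hB : v * x = u * (t * (1 - x))) :
    fiberPoint lam u v x = (y, t) := by
  unfold fiberPoint
  congr 1
  · rw [div_eq_iff (mul_ne_zero two_ne_zero hux)]; linear_combination -hA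
  · rw [div_eq_iff hu1]; linear_combination hB

lemma fiberPoint_rel (hux : u - lam * x ≠ 0) (hu1 : u * (1 - x) ≠ 0) :
    2 * (fiberPoint lam u v x).1 * (u - lam * x) = lam * x ∧
      v * x = u * ((fiberPoint lam u v x).2 * (1 - x)) := by
  unfold fiberPoint
  constructor
  · field_simp
  · field_simp
    rw [mul_assoc (v * x) u, mul_div_cancel_right₀ _ hu1]

def source : Set (ℝ × ℝ) := {p | p.1 < 0 ∧ p.1 ≠ -1 / 2 ∧ 1 - p.1 < p.2 ^ 2 * (1 + p.1)}

lemma union_eq_source :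
    {p : ℝ × ℝ | -1 < p.1 ∧ p.1 < -1/2 ∧ p.2 ^ 2 * (1 + p.1) > 1 - p.1} ∪
      {p : ℝ × ℝ | -1/2 < p.1 ∧ p.1 < 0 ∧ p.2 ^ 2 * (1 + p.1) > 1 - p.1} = source := by
  ext ⟨y, t⟩
  simp only [Set.mem_union, Set.mem_ofPred_eq, source]
  constructor
  · rintro (⟨h1, h2, h3⟩ | ⟨h1, h2, h3⟩)
    · exact ⟨by linarith, h2.ne, h3⟩
    · exact ⟨h2, h1.ne', h3⟩
  · rintro ⟨h1, h2, h3⟩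
    have : -1 < y := by nlinarith [sq_nonneg t]
    rcases h2.lt_or_gt with h | h
    exacts [Or.inl ⟨this, h, h3⟩, Or.inr ⟨h, h1, h3⟩]

lemma exists_rel_of_mem_source {p : ℝ × ℝ} (hp : p ∈ source) :
    ∃ x, 1 < x ∧ x - p.1 = p.2 ^ 2 * (2 + p.1 - x) ∧
      2 * p.1 * ((e1Traj lam p.1 p.2).re - lam * x) = lam * x ∧
      (e1Traj lam p.1 p.2).im * x = (e1Traj lam p.1 p.2).re * (p.2 * (1 - x)) := by
  obtain ⟨hy, -, hyt⟩ := hp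
  set x := (p.1 + (p.1 + 2) * p.2 ^ 2) / (1 + p.2 ^ 2) with hx
  have hX : x - p.1 = p.2 ^ 2 * (2 + p.1 - x) := by rw [hx]; field_simp; ring
  have hx1 := one_lt_of_sub_eq hyt hX
  exact ⟨x, hx1, hX, (e1Traj_eq_iff hy.ne (by positivity) hX).mp rfl⟩

lemma e1Traj_mem_target (hlam : 0 < lam) {p : ℝ × ℝ} (hp : p ∈ source) :
    e1Traj lam p.1 p.2 ∈ {z : ℂ | z.re < lam / 2 ∧ z.re ≠ 0 ∧ z.im ≠ 0} := by
  obtain ⟨x, -, hX, hA, hB⟩ := exists_rel_of_mem_source (lam := lam) hp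
  exact target_of_source hlam hp.1 hp.2.1 hp.2.2 hX hA hB

lemma exists_resolvent_eq_zero_of_mem_source (hlam : 0 < lam) {p : ℝ × ℝ} (hp : p ∈ source) :
    ∃ x, 1 < x ∧ resolvent lam (e1Traj lam p.1 p.2).re (e1Traj lam p.1 p.2).im x = 0 ∧
      fiberPoint lam (e1Traj lam p.1 p.2).re (e1Traj lam p.1 p.2).im x = p := by
  obtain ⟨x, hx1, hX, hA, hB⟩ := exists_rel_of_mem_source (lam := lam) hp
  obtain ⟨hu, hu0, -⟩ := e1Traj_mem_target hlam hp
  have hux : (e1Traj lam p.1 p.2).re - lam * x ≠ 0 := by nlinarith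
  have hu1 := mul_ne_zero hu0 (sub_ne_zero.2 hx1.ne)
  refine ⟨x, hx1, ?_, fiberPoint_eq hux hu1 hA hB⟩
  have h := resolvent_mul_eq hA hB
  rw [hX, sub_self, mul_zero] at h
  exact (mul_eq_zero.mp h).resolve_right (by positivity)

lemma fiberPoint_spec (hlam : 0 < lam) {z : ℂ} (hu : z.re < lam / 2) (hu0 : z.re ≠ 0)
    (hx1 : 1 < x) (hr : resolvent lam z.re z.im x = 0) :
    fiberPoint lam z.re z.im x ∈ source ∧
      e1Traj lam (fiberPoint lam z.re z.im x).1 (fiberPoint lam z.re z.im x).2 = z := by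
  have hux : z.re - lam * x ≠ 0 := by nlinarith
  have hu1 := mul_ne_zero hu0 (sub_ne_zero.2 hx1.ne)
  obtain ⟨hA, hB⟩ := fiberPoint_rel (v := z.im) hux hu1
  have hX : x - (fiberPoint lam z.re z.im x).1 =
      (fiberPoint lam z.re z.im x).2 ^ 2 * (2 + (fiberPoint lam z.re z.im x).1 - x) := by
    have h := resolvent_mul_eq hA hB
    rw [hr, zero_mul, eq_comm] at h
    simpa [sub_eq_zero, hux, hu0, hx1.ne] using h
  have hs := source_of_target hlam hu hu0 hx1 hX hA
  exact ⟨hs, (e1Traj_eq_iff hs.1.ne (by positivity) hX).mpr ⟨hA, hB⟩⟩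

end PointA

open PointA in
theorem point_A_bijection (lam : ℝ) (hlam : 0 < lam) :
    Set.BijOn (fun p : ℝ × ℝ => e1Traj lam p.1 p.2)
      ({p : ℝ × ℝ | -1 < p.1 ∧ p.1 < -1/2 ∧ p.2 ^ 2 * (1 + p.1) > 1 - p.1} ∪
       {p : ℝ × ℝ | -1/2 < p.1 ∧ p.1 < 0 ∧ p.2 ^ 2 * (1 + p.1) > 1 - p.1})
      {z : ℂ | z.re < lam / 2 ∧ z.re ≠ 0 ∧ z.im ≠ 0} := by
  rw [union_eq_source]
  refine ⟨fun p hp => e1Traj_mem_target hlam hp, ?_, ?_⟩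
  · intro p hp q hq hpq
    obtain ⟨hu, hu0, -⟩ := e1Traj_mem_target hlam hq
    obtain ⟨xp, hxp, hrp, hp'⟩ := exists_resolvent_eq_zero_of_mem_source hlam hp
    obtain ⟨xq, hxq, hrq, hq'⟩ := exists_resolvent_eq_zero_of_mem_source hlam hq
    simp only at hpq
    rw [hpq] at hrp hp'
    rw [← hp', eq_of_resolvent_eq_zero hlam hu hu0 hxp hxq hrp hrq, hq']
  · rintro z ⟨hu, hu0, hv0⟩
    obtain ⟨x, hx, hr⟩ := exists_resolvent_eq_zero hlam hu hv0
    exact ⟨_, fiberPoint_spec hlam hu hu0 hx.1 hr⟩
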